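/- Let 𝒢 be a family of connected non-trivial graphs on a common vertex set V. Let P_n be a path graph of order n ≥ 7 with n ≢ 1 (mod 5) and n ≢ 3 (mod 5), and let C_n be the cycle graph obtained from P_n by joining its two leaves by an edge. Let B be an adjacency basis of both P_n and C_n which is also a dominating set of both. Then for every family ℋ ⊆ 𝒢_B(P_n) ∪ 𝒢_B(C_n) such that P_n ∈ ℋ or C_n ∈ ℋ, Sd_A(𝒢⊙ℋ) = |V| · ⌊(2n+2)/5⌋. -/

import Mathlib

open SimpleGraph

/-- `S` is a metric generator for `G`: every pair of distinct vertices is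
distinguished by some element of `S` via the shortest-path distance. -/
def IsMetricGen {V : Type*} (G : SimpleGraph V) (S : Set V) : Prop :=
  ∀ u v : V, u ≠ v → ∃ s ∈ S, G.dist s u ≠ G.dist s v

/-- `S` is an adjacency generator for `G`. -/
def IsAdjGen {V : Type*} (G : SimpleGraph V) (S : Set V) : Prop :=
  ∀ x y : V, x ∉ S → y ∉ S → x ≠ y → ∃ s ∈ S, Xor' (G.Adj s x) (G.Adj s y)

/-- `S` is a simultaneous metric generator for the family `𝒢`. -/
def IsSimMetricGen {V : Type*} (𝒢 : Set (SimpleGraph V)) (S : Set V) : Prop :=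
  ∀ G ∈ 𝒢, IsMetricGen G S

/-- `S` is a simultaneous adjacency generator for the family `ℋ`. -/
def IsSimAdjGen {V : Type*} (ℋ : Set (SimpleGraph V)) (S : Set V) : Prop :=
  ∀ H ∈ ℋ, IsAdjGen H S

/-- The simultaneous metric dimension of a family of graphs. -/
noncomputable def Sd {V : Type*} (𝒢 : Set (SimpleGraph V)) : ℕ :=
  sInf {n | ∃ S : Set V, S.ncard = n ∧ IsSimMetricGen 𝒢 S}

/-- The simultaneous adjacency dimension of a family of graphs. -/
noncomputable def SdA {V : Type*} (ℋ : Set (SimpleGraph V)) : ℕ :=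
  sInf {n | ∃ S : Set V, S.ncard = n ∧ IsSimAdjGen ℋ S}

/-- The adjacency dimension of a graph. -/
noncomputable def adjDim {V : Type*} (G : SimpleGraph V) : ℕ := SdA {G}

/-- `B` is an adjacency basis of `G`. -/
def IsAdjBasis {V : Type*} (G : SimpleGraph V) (B : Set V) : Prop :=
  IsAdjGen G B ∧ B.ncard = adjDim G

/-- `B` is a simultaneous adjacency basis of the family `ℋ`. -/
def IsSimAdjBasis {V : Type*} (ℋ : Set (SimpleGraph V)) (B : Set V) : Prop :=
  IsSimAdjGen ℋ B ∧ B.ncard = SdA ℋ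

/-- `D` is a dominating set of `G`. -/
def IsDomSet {V : Type*} (G : SimpleGraph V) (D : Set V) : Prop :=
  ∀ v ∉ D, ∃ u ∈ D, G.Adj u v

/-- `D` is a simultaneous dominating set of the family `𝒢`. -/
def IsSimDomSet {V : Type*} (𝒢 : Set (SimpleGraph V)) (D : Set V) : Prop :=
  ∀ G ∈ 𝒢, IsDomSet G D

/-- The simultaneous domination number of a family of graphs. -/
noncomputable def Sgamma {V : Type*} (𝒢 : Set (SimpleGraph V)) : ℕ :=
  sInf {n | ∃ D : Set V, D.ncard = n ∧ IsSimDomSet 𝒢 D}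

/-- The domination number of a graph. -/
noncomputable def domNum {V : Type*} (G : SimpleGraph V) : ℕ := Sgamma {G}

/-- `γ'(G) = min over vertices `v` of `γ(G - v)`. -/
noncomputable def gammaPrime {V : Type*} (G : SimpleGraph V) : ℕ :=
  sInf {n | ∃ v : V, n = domNum (G.induce {v}ᶜ)}

/-- The corona product `G ⊙ H`: one copy of `G` together with a copy of `H`
for each vertex `i` of `G`, joining `i` to every vertex of its copy. -/
def corona {V V' : Type*} (G : SimpleGraph V) (H : SimpleGraph V') :
    SimpleGraph (V ⊕ V × V') where
  Adj x y :=
    match x, y with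
    | Sum.inl i, Sum.inl j => G.Adj i j
    | Sum.inl i, Sum.inr p => i = p.1
    | Sum.inr p, Sum.inl j => p.1 = j
    | Sum.inr p, Sum.inr q => p.1 = q.1 ∧ H.Adj p.2 q.2
  symm := ⟨by
    rintro (i | p) (j | q) h
    · exact G.adj_symm h
    · exact h.symm
    · exact h.symm
    · exact ⟨h.1.symm, H.adj_symm h.2⟩⟩
  loopless := ⟨by
    rintro (i | p) h
    · exact G.loopless.irrefl i h
    · exact H.loopless.irrefl p.2 h.2⟩

/-- The family `{G ⊙ H : G ∈ 𝒢, H ∈ ℋ}` of corona products. -/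
def coronaFam {V V' : Type*} (𝒢 : Set (SimpleGraph V)) (ℋ : Set (SimpleGraph V')) :
    Set (SimpleGraph (V ⊕ V × V')) :=
  {K | ∃ G ∈ 𝒢, ∃ H ∈ ℋ, K = corona G H}

/-- The join `G + H` of two (vertex-disjoint) graphs. -/
def joinG {V₁ V₂ : Type*} (G : SimpleGraph V₁) (H : SimpleGraph V₂) :
    SimpleGraph (V₁ ⊕ V₂) where
  Adj x y :=
    match x, y with
    | Sum.inl a, Sum.inl b => G.Adj a b
    | Sum.inl _, Sum.inr _ => True
    | Sum.inr _, Sum.inl _ => True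
    | Sum.inr a, Sum.inr b => H.Adj a b
  symm := ⟨by
    rintro (a | a) (b | b) h
    · exact G.adj_symm h
    · trivial
    · trivial
    · exact H.adj_symm h⟩
  loopless := ⟨by
    rintro (a | a) h
    · exact G.loopless.irrefl a h
    · exact H.loopless.irrefl a h⟩

/-- The family `{G + H : G ∈ 𝒢, H ∈ ℋ}` of joins. -/
def joinFam {V₁ V₂ : Type*} (𝒢 : Set (SimpleGraph V₁)) (ℋ : Set (SimpleGraph V₂)) :
    Set (SimpleGraph (V₁ ⊕ V₂)) :=
  {K | ∃ G ∈ 𝒢, ∃ H ∈ ℋ, K = joinG G H}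

/-- The family `𝒢_B(G)`: all graphs `G'` such that, for some permutation `f` of the
vertex set fixing `B` pointwise, `N_{G'}(x) = f(N_G(x))` for every `x ∈ B`. -/
def GBfam {V : Type*} (G : SimpleGraph V) (B : Set V) : Set (SimpleGraph V) :=
  {G' | ∃ f : Equiv.Perm V, (∀ x ∈ B, f x = x) ∧
    ∀ x ∈ B, G'.neighborSet x = f '' (G.neighborSet x)}

/-!
An adjacency generator of `G ⊙ H` restricts to an adjacency generator of every copy of `H`,
so `Sd_A(𝒢 ⊙ ℋ) ≥ |V| · dim_A(H)` for the graph `H = P_n` or `C_n` lying in `ℋ`. Conversely,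
`B` placed in every copy generates every `G ⊙ H` as soon as `B` is a dominating adjacency
generator of `H` such that no vertex of `H` is adjacent to all of `B`. These pass from
`P_n`, `C_n` to all of `𝒢_B(P_n) ∪ 𝒢_B(C_n)` through the permutation fixing `B`, the last one
because `|B| ≥ 3` exceeds the maximum degree `2`. Finally `dim_A(P_n) = ⌊(2n+2)/5⌋`: the
vertices `≡ 1, 3 (mod 5)` form a generator, and counting bounds every generator of a graph
of maximum degree two from below.
-/

open Finset

section Dimension
variable {V : Type*}

lemma SdA_le_ncard {ℋ : Set (SimpleGraph V)} {S : Set V} (hS : IsSimAdjGen ℋ S) :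
    SdA ℋ ≤ S.ncard :=
  Nat.sInf_le ⟨S, rfl, hS⟩

lemma exists_isSimAdjGen_ncard_eq_SdA [Finite V] (ℋ : Set (SimpleGraph V)) :
    ∃ S : Set V, S.ncard = SdA ℋ ∧ IsSimAdjGen ℋ S :=
  Nat.sInf_mem (s := {n | ∃ S : Set V, S.ncard = n ∧ IsSimAdjGen ℋ S})
    ⟨_, Set.univ, rfl, fun _ _ x _ hx => absurd (Set.mem_univ x) hx⟩

lemma adjDim_le_ncard {G : SimpleGraph V} {S : Set V} (hS : IsAdjGen G S) :
    adjDim G ≤ S.ncard :=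
  SdA_le_ncard (by rintro _ rfl; exact hS)

lemma exists_isAdjGen_ncard_eq_adjDim [Finite V] (G : SimpleGraph V) :
    ∃ S : Set V, S.ncard = adjDim G ∧ IsAdjGen G S :=
  (exists_isSimAdjGen_ncard_eq_SdA {G}).imp fun _ h => ⟨h.1, h.2 G rfl⟩

end Dimension

section DegreeTwo
variable {V : Type*} {G : SimpleGraph V}

lemma IsAdjGen.eq_of_forall_adj_iff {S : Set V} (hS : IsAdjGen G S) {x y : V}
    (hx : x ∉ S) (hy : y ∉ S) (h : ∀ s ∈ S, G.Adj s x ↔ G.Adj s y) : x = y := by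
  by_contra hxy
  obtain ⟨s, hs, hxor⟩ := hS x y hx hy hxy
  exact (xor_iff_not_iff _ _).1 hxor (h s hs)

variable [Fintype V] [DecidableEq V] [DecidableRel G.Adj]

/-- The traces `S ∩ N(x)`, `x ∉ S`, are pairwise distinct, so those of size `k` inject into
the `k`-subsets of `S`. -/
lemma IsAdjGen.card_filter_compl_le_choose {S : Finset V} (hS : IsAdjGen G S) (k : ℕ) :
    #{x ∈ Sᶜ | #{s ∈ S | G.Adj s x} = k} ≤ (#S).choose k := by
  rw [← card_powersetCard]
  refine card_le_card_of_injOn (fun x => {s ∈ S | G.Adj s x})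
    (fun x hx => mem_powersetCard.2 ⟨filter_subset _ _, (mem_filter.1 hx).2⟩) ?_
  intro x hx y hy hxy
  simp only [coe_filter, Set.mem_ofPred_eq, mem_compl] at hx hy
  refine hS.eq_of_forall_adj_iff (mod_cast hx.1) (mod_cast hy.1) fun s hs => ?_
  have := congrArg (s ∈ ·) hxy
  simpa [mem_filter, show s ∈ S from hs] using this

lemma sum_card_filter_adj_le_two_mul (hdeg : ∀ v, G.degree v ≤ 2) (S : Finset V) :
    ∑ x ∈ Sᶜ, #{s ∈ S | G.Adj s x} ≤ 2 * #S := by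
  calc ∑ x ∈ Sᶜ, #{s ∈ S | G.Adj s x}
      = ∑ s ∈ S, #{x ∈ Sᶜ | G.Adj s x} :=
        (sum_card_bipartiteAbove_eq_sum_card_bipartiteBelow _).symm
    _ ≤ ∑ _s ∈ S, 2 := sum_le_sum fun s _ =>
        ((card_le_card fun x hx => by simpa using (mem_filter.1 hx).2).trans_eq
          (card_neighborFinset_eq_degree G s)).trans (hdeg s)
    _ = 2 * #S := by rw [sum_const, smul_eq_mul, mul_comm]

/-- In a graph of maximum degree two, at most one vertex outside `S` has no neighbour
in `S` and at most `|S|` have exactly one, while at most `2|S|` edges leave `S`. -/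
lemma IsAdjGen.two_mul_card_le (hdeg : ∀ v, G.degree v ≤ 2) {S : Finset V}
    (hS : IsAdjGen G S) : 2 * Fintype.card V ≤ 5 * #S + 2 := by
  have h0 := hS.card_filter_compl_le_choose 0
  have h1 := hS.card_filter_compl_le_choose 1
  have h2 := sum_card_filter_adj_le_two_mul hdeg S
  have hsum : 2 * #Sᶜ ≤ ∑ x ∈ Sᶜ, #{s ∈ S | G.Adj s x} +
      2 * #{x ∈ Sᶜ | #{s ∈ S | G.Adj s x} = 0} + #{x ∈ Sᶜ | #{s ∈ S | G.Adj s x} = 1} := by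
    simp only [card_filter, mul_sum, ← sum_add_distrib]
    calc 2 * #Sᶜ = ∑ _x ∈ Sᶜ, 2 := by rw [sum_const, smul_eq_mul, mul_comm]
      _ ≤ _ := sum_le_sum fun x _ => by split_ifs <;> omega
  rw [Nat.choose_zero_right] at h0
  rw [Nat.choose_one_right] at h1
  rw [card_compl] at hsum
  have := card_le_univ S
  omega

lemma two_mul_card_le_five_mul_adjDim_add_two (hdeg : ∀ v, G.degree v ≤ 2) :
    2 * Fintype.card V ≤ 5 * adjDim G + 2 := by
  classical
  obtain ⟨S, hcard, hS⟩ := exists_isAdjGen_ncard_eq_adjDim G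
  rw [← hcard, Set.ncard_eq_toFinset_card']
  exact IsAdjGen.two_mul_card_le hdeg (by rwa [Set.coe_toFinset])

end DegreeTwo

lemma cycleGraph_degree_le_two {n : ℕ} (v : Fin n) : (cycleGraph n).degree v ≤ 2 := by
  match n with
  | 0 => exact v.elim0
  | 1 => simp [cycleGraph_one_eq_bot]
  | _ + 2 => exact cycleGraph_degree_two_le.trans_le card_le_two

lemma degree_le_two_of_le_cycleGraph {n : ℕ} {G : SimpleGraph (Fin n)} [DecidableRel G.Adj]
    (hG : G ≤ cycleGraph n) (v : Fin n) : G.degree v ≤ 2 :=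
  (degree_le_of_le hG).trans (cycleGraph_degree_le_two v)

lemma pathGraph_sup_edge_le_cycleGraph {n : ℕ} (hn : 2 ≤ n) :
    pathGraph n ⊔ fromEdgeSet {s((⟨0, by omega⟩ : Fin n), ⟨n - 1, by omega⟩)} ≤
      cycleGraph n := by
  refine sup_le pathGraph_le_cycleGraph ?_
  rw [fromEdgeSet_le]
  rintro e ⟨rfl, -⟩
  rw [mem_edgeSet, cycleGraph_adj']
  left
  simpa [Fin.sub_def, Nat.sub_sub_self (by omega : 1 ≤ n)] using Nat.mod_eq_of_lt hn

lemma card_filter_range_mod_five (n : ℕ) :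
    #{k ∈ range n | k % 5 = 1 ∨ k % 5 = 3} = (2 * n + 2) / 5 := by
  induction n with
  | zero => rfl
  | succ n ih =>
    rw [range_add_one, filter_insert]
    split_ifs with h
    · rw [card_insert_of_notMem (by simp)]; omega
    · omega

def pathBasis (n : ℕ) : Finset (Fin n) :=
  {k ∈ range n | k % 5 = 1 ∨ k % 5 = 3}.attachFin fun _ hk => mem_range.1 (mem_filter.1 hk).1

lemma card_pathBasis (n : ℕ) : #(pathBasis n) = (2 * n + 2) / 5 := by
  rw [pathBasis, card_attachFin, card_filter_range_mod_five]

lemma mem_pathBasis {n : ℕ} {k : Fin n} : k ∈ pathBasis n ↔ k.val % 5 = 1 ∨ k.val % 5 = 3 := by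
  simp [pathBasis, mem_attachFin]

/-- A vertex outside `pathBasis n` is recognised by its neighbours in it: `{k + 1}` if
`k ≡ 0`, `{k - 1, k + 1}` if `k ≡ 2` and `{k - 1}` if `k ≡ 4`; only for `n ≡ 3` would the
last vertex, `≡ 2`, lose its right neighbour and collide with the vertex two before it. -/
lemma isAdjGen_pathBasis {n : ℕ} (h3 : n % 5 ≠ 3) :
    IsAdjGen (pathGraph n) (pathBasis n : Set (Fin n)) := by
  intro x y hx hy hxy
  by_contra! hc
  have H : ∀ s : ℕ, s < n → (s % 5 = 1 ∨ s % 5 = 3) →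
      ((s + 1 = x.val ∨ x.val + 1 = s) ↔ (s + 1 = y.val ∨ y.val + 1 = s)) := fun s hs hm => by
    simpa [pathGraph_adj] using
      not_not.1 (mt (xor_iff_not_iff _ _).2 (hc ⟨s, hs⟩ (mem_pathBasis.2 hm)))
  rw [Finset.mem_coe, mem_pathBasis] at hx hy
  have hxy' : x.val ≠ y.val := Fin.val_injective.ne hxy
  have := H (x.val + 1); have := H (x.val - 1)
  have := H (y.val + 1); have := H (y.val - 1)
  have := x.isLt; have := y.isLt
  omega

lemma adjDim_pathGraph {n : ℕ} (h3 : n % 5 ≠ 3) : adjDim (pathGraph n) = (2 * n + 2) / 5 := by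
  classical
  refine le_antisymm ?_ ?_
  · simpa [card_pathBasis] using adjDim_le_ncard (isAdjGen_pathBasis h3)
  · have := two_mul_card_le_five_mul_adjDim_add_two
      (degree_le_two_of_le_cycleGraph (pathGraph_le_cycleGraph (n := n)))
    rw [Fintype.card_fin] at this
    omega

section GBfam
variable {V : Type*} {G H : SimpleGraph V} {B : Set V}

lemma exists_perm_adj_iff_of_mem_GBfam (hH : H ∈ GBfam G B) :
    ∃ f : Equiv.Perm V, (∀ x ∈ B, f x = x) ∧ ∀ b ∈ B, ∀ v, H.Adj b v ↔ G.Adj b (f.symm v) := by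
  obtain ⟨f, hf, hN⟩ := hH
  refine ⟨f, hf, fun b hb v => ?_⟩
  rw [← mem_neighborSet, hN b hb, Equiv.image_eq_preimage_symm]
  rfl

lemma Equiv.Perm.symm_apply_notMem {f : Equiv.Perm V} (hf : ∀ x ∈ B, f x = x) {v : V}
    (hv : v ∉ B) : f.symm v ∉ B :=
  fun h => hv (by rwa [← f.apply_symm_apply v, hf _ h])

lemma IsAdjGen.of_mem_GBfam (hG : IsAdjGen G B) (hH : H ∈ GBfam G B) : IsAdjGen H B := by
  obtain ⟨f, hf, hadj⟩ := exists_perm_adj_iff_of_mem_GBfam hH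
  intro x y hx hy hxy
  obtain ⟨b, hb, hxor⟩ := hG (f.symm x) (f.symm y) (Equiv.Perm.symm_apply_notMem hf hx)
    (Equiv.Perm.symm_apply_notMem hf hy) (f.symm.injective.ne hxy)
  exact ⟨b, hb, by rwa [hadj b hb x, hadj b hb y]⟩

lemma IsDomSet.of_mem_GBfam (hG : IsDomSet G B) (hH : H ∈ GBfam G B) : IsDomSet H B := by
  obtain ⟨f, hf, hadj⟩ := exists_perm_adj_iff_of_mem_GBfam hH
  intro v hv
  obtain ⟨b, hb, hbv⟩ := hG (f.symm v) (Equiv.Perm.symm_apply_notMem hf hv)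
  exact ⟨b, hb, (hadj b hb v).2 hbv⟩

lemma not_subset_neighborSet_of_mem_GBfam (hG : ∀ v, ¬B ⊆ G.neighborSet v)
    (hH : H ∈ GBfam G B) (v : V) : ¬B ⊆ H.neighborSet v := by
  obtain ⟨f, -, hadj⟩ := exists_perm_adj_iff_of_mem_GBfam hH
  refine fun hB => hG (f.symm v) fun b hb => ?_
  exact G.adj_symm ((hadj b hb v).1 (H.adj_symm (hB hb)))

end GBfam

lemma not_subset_neighborSet_of_degree_lt {V : Type*} [Fintype V] {G : SimpleGraph V}
    [DecidableRel G.Adj] {B : Set V} {v : V} (h : G.degree v < B.ncard) :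
    ¬B ⊆ G.neighborSet v := by
  intro hB
  have := Set.ncard_le_ncard hB
  rw [← coe_neighborFinset, Set.ncard_coe_finset, card_neighborFinset_eq_degree] at this
  omega

section Corona
variable {V V' : Type*} {G : SimpleGraph V} {H : SimpleGraph V'}

/-- Outside the copy `H_i`, every vertex sees two vertices of `H_i` alike, so an adjacency
generator of `G ⊙ H` restricts to one of each copy. -/
lemma IsAdjGen.corona_fiber {S : Set (V ⊕ V × V')} (hS : IsAdjGen (corona G H) S) (i : V) :
    IsAdjGen H {w | .inr (i, w) ∈ S} := by
  intro x y hx hy hxy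
  obtain ⟨s, hs, hxor⟩ := hS (.inr (i, x)) (.inr (i, y)) hx hy (by simpa using hxy)
  rcases s with j | ⟨j, w⟩
  · exact absurd Iff.rfl ((xor_iff_not_iff _ _).1 hxor)
  · have hj : j = i := by rcases hxor with ⟨h, -⟩ | ⟨h, -⟩ <;> exact h.1
    subst hj
    refine ⟨w, hs, ?_⟩
    rcases hxor with ⟨h1, h2⟩ | ⟨h1, h2⟩
    · exact Or.inl ⟨h1.2, fun h => h2 ⟨rfl, h⟩⟩
    · exact Or.inr ⟨h1.2, fun h => h2 ⟨rfl, h⟩⟩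

lemma card_mul_adjDim_le_of_isAdjGen_corona [Fintype V] [Fintype V'] {S : Set (V ⊕ V × V')}
    (hS : IsAdjGen (corona G H) S) : Fintype.card V * adjDim H ≤ S.ncard := by
  classical
  calc Fintype.card V * adjDim H = ∑ _i : V, adjDim H := by
        rw [sum_const, card_univ, smul_eq_mul]
    _ ≤ ∑ i : V, #{w | .inr (i, w) ∈ S} := sum_le_sum fun i _ => by
        simpa [Set.ncard_eq_toFinset_card'] using adjDim_le_ncard (hS.corona_fiber i)
    _ = #{p : V × V' | .inr p ∈ S} := by
        simp only [card_filter, Fintype.sum_prod_type]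
    _ ≤ S.ncard := by
        rw [Set.ncard_eq_toFinset_card']
        exact card_le_card_of_injOn Sum.inr (fun _ hp => by simpa using hp)
          Sum.inr_injective.injOn

/-- Taking `B` in every copy of `H` separates two copies by domination, a vertex of `G`
from its own copy because no vertex of `H` is adjacent to all of `B`, and two vertices
of one copy because `B` generates `H`. -/
lemma isAdjGen_corona [Nonempty V'] {B : Set V'} (hgen : IsAdjGen H B) (hdom : IsDomSet H B)
    (hB : ∀ v, ¬B ⊆ H.neighborSet v) :
    IsAdjGen (corona G H) (Sum.inr '' (Set.univ ×ˢ B)) := by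
  have hmem : ∀ i b, b ∈ B → (.inr (i, b) : V ⊕ V × V') ∈ Sum.inr '' (Set.univ ×ˢ B) :=
    fun i b hb => ⟨(i, b), ⟨Set.mem_univ i, hb⟩, rfl⟩
  have hnotMem : ∀ i v, (.inr (i, v) : V ⊕ V × V') ∉ Sum.inr '' (Set.univ ×ˢ B) → v ∉ B :=
    fun i v h hv => h (hmem i v hv)
  obtain ⟨b₀, hb₀⟩ := Set.nonempty_of_not_subset (hB (Classical.arbitrary V'))
  have hroot : ∀ i j v, v ∉ B → ∃ s ∈ Sum.inr '' (Set.univ ×ˢ B),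
      (corona G H).Adj s (.inl i) ∧ ¬(corona G H).Adj s (.inr (j, v)) := by
    intro i j v hv
    by_cases hij : i = j
    · subst hij
      obtain ⟨b, hb, hbv⟩ := Set.not_subset.1 (hB v)
      exact ⟨.inr (i, b), hmem i b hb, rfl, fun h => hbv (H.adj_symm h.2)⟩
    · exact ⟨.inr (i, b₀), hmem i b₀ hb₀.1, rfl, fun h => hij h.1⟩
  intro x y hx hy hxy
  rcases x with i | ⟨i, u⟩ <;> rcases y with j | ⟨j, v⟩
  · exact ⟨.inr (i, b₀), hmem i b₀ hb₀.1, Or.inl ⟨rfl, fun h => hxy (congrArg _ h)⟩⟩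
  · obtain ⟨s, hs, h⟩ := hroot i j v (hnotMem j v hy)
    exact ⟨s, hs, Or.inl h⟩
  · obtain ⟨s, hs, h⟩ := hroot j i u (hnotMem i u hx)
    exact ⟨s, hs, Or.inr h⟩
  · by_cases hij : i = j
    · subst hij
      obtain ⟨b, hb, hxor⟩ := hgen u v (hnotMem i u hx) (hnotMem i v hy)
        (fun h => hxy (by rw [h]))
      refine ⟨.inr (i, b), hmem i b hb, ?_⟩
      rcases hxor with ⟨h1, h2⟩ | ⟨h1, h2⟩
      · exact Or.inl ⟨⟨rfl, h1⟩, fun h => h2 h.2⟩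
      · exact Or.inr ⟨⟨rfl, h1⟩, fun h => h2 h.2⟩
    · obtain ⟨b, hb, hbu⟩ := hdom u (hnotMem i u hx)
      exact ⟨.inr (i, b), hmem i b hb, Or.inl ⟨⟨rfl, hbu⟩, fun h => hij h.1⟩⟩

lemma ncard_inr_image_univ_prod [Finite V] (B : Set V') :
    (Sum.inr '' (Set.univ ×ˢ B) : Set (V ⊕ V × V')).ncard = Nat.card V * B.ncard := by
  rw [Set.ncard_image_of_injective _ Sum.inr_injective, Set.ncard_prod, Set.ncard_univ]

end Corona

theorem SdA_coronaFam_eq {V V' : Type*} [Fintype V] [Fintype V'] [Nonempty V']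
    {𝒢 : Set (SimpleGraph V)} (h𝒢 : 𝒢.Nonempty) {ℋ : Set (SimpleGraph V')} {B : Set V'}
    (hℋ : ∀ H ∈ ℋ, IsAdjGen H B ∧ IsDomSet H B ∧ ∀ v, ¬B ⊆ H.neighborSet v)
    (hdim : ∃ H ∈ ℋ, B.ncard ≤ adjDim H) :
    SdA (coronaFam 𝒢 ℋ) = Fintype.card V * B.ncard := by
  refine le_antisymm ?_ ?_
  · calc SdA (coronaFam 𝒢 ℋ) ≤ (Sum.inr '' (Set.univ ×ˢ B)).ncard := by
          refine SdA_le_ncard ?_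
          rintro _ ⟨G, -, H, hH, rfl⟩
          obtain ⟨hgen, hdom, hB⟩ := hℋ H hH
          exact isAdjGen_corona hgen hdom hB
      _ = Fintype.card V * B.ncard := by
          rw [ncard_inr_image_univ_prod, Nat.card_eq_fintype_card]
  · obtain ⟨S, hS, hgen⟩ := exists_isSimAdjGen_ncard_eq_SdA (coronaFam 𝒢 ℋ)
    obtain ⟨G, hG⟩ := h𝒢
    obtain ⟨H, hH, hdimH⟩ := hdim
    rw [← hS]
    exact (Nat.mul_le_mul_left _ hdimH).trans
      (card_mul_adjDim_le_of_isAdjGen_corona (hgen _ ⟨G, hG, H, hH, rfl⟩))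

theorem statement_6 {V : Type*} [Fintype V]
    (𝒢 : Set (SimpleGraph V)) (h𝒢ne : 𝒢.Nonempty)
    (n : ℕ) (hn : 7 ≤ n) (h3 : n % 5 ≠ 3)
    (Pn Cn : SimpleGraph (Fin n))
    (hPn : Pn = SimpleGraph.pathGraph n)
    (hCn : Cn = Pn ⊔ SimpleGraph.fromEdgeSet {s((⟨0, by omega⟩ : Fin n), (⟨n - 1, by omega⟩ : Fin n))})
    (B : Set (Fin n))
    (hBP : IsAdjBasis Pn B) (hBC : IsAdjBasis Cn B)
    (hDP : IsDomSet Pn B) (hDC : IsDomSet Cn B)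
    (ℋ : Set (SimpleGraph (Fin n))) (hsub : ℋ ⊆ GBfam Pn B ∪ GBfam Cn B)
    (hmem : Pn ∈ ℋ ∨ Cn ∈ ℋ) :
    SdA (coronaFam 𝒢 ℋ) = Fintype.card V * ((2 * n + 2) / 5) := by
  classical
  subst hPn
  have hB : B.ncard = (2 * n + 2) / 5 := hBP.2.trans (adjDim_pathGraph h3)
  have hCn_le : Cn ≤ cycleGraph n := hCn ▸ pathGraph_sup_edge_le_cycleGraph (by omega)
  have hGB : ∀ G : SimpleGraph (Fin n), G ≤ cycleGraph n → IsAdjGen G B → IsDomSet G B →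
      ∀ H ∈ GBfam G B, IsAdjGen H B ∧ IsDomSet H B ∧ ∀ v, ¬B ⊆ H.neighborSet v :=
    fun G hG hgen hdom H hH => ⟨hgen.of_mem_GBfam hH, hdom.of_mem_GBfam hH,
      not_subset_neighborSet_of_mem_GBfam (fun v => not_subset_neighborSet_of_degree_lt
        ((degree_le_two_of_le_cycleGraph hG v).trans_lt (by omega))) hH⟩
  have : Nonempty (Fin n) := ⟨⟨0, by omega⟩⟩
  rw [← hB]
  refine SdA_coronaFam_eq h𝒢ne (fun H hH => ?_) ?_
  · rcases hsub hH with hH | hH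
    exacts [hGB _ pathGraph_le_cycleGraph hBP.1 hDP H hH, hGB Cn hCn_le hBC.1 hDC H hH]
  · rcases hmem with h | h
    exacts [⟨_, h, hBP.2.le⟩, ⟨_, h, hBC.2.le⟩]
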